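/- Assume n ≤ m, v_max < μ, and 0 < ε ≤ 1/5. Let π* be an optimal allocation and let π be an allocation satisfying |V_i(π) − V_i(π*)| ≤ 2ε·v_max for every agent i. Then every V_i(π) is positive and (1/n) · Σ_i 1/V_i(π) ≤ 2/(μ(1 − 4ε)). -/

import Mathlib

/-!
At an NSW-optimal allocation `πs` every agent has positive value (as `n ≤ m`, some allocation
does), so moving a single good `j` from its owner `k` to another agent `i` cannot increase the
product of the two affected values: `(V_i + v_j)(V_k - v_j) ≤ V_i V_k`, i.e. `V_k - v_j ≤ V_i`.
Some agent `k` has `V_k ≥ μ > v_max`, so `k` owns at least two goods and its cheapest one has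
`v_j ≤ V_k / 2`; hence every agent gets at least `μ / 2` under `πs`. Perturbing by at most
`2ε v_max ≤ 2ε μ` keeps every value of `π` above `μ (1 - 4ε) / 2 > 0`, which bounds each `1 / V_i`.
-/

/-- The valuation of agent `i` under allocation `π`: the sum of utilities of goods assigned to `i`. -/
def V {G A : Type*} [Fintype G] [DecidableEq A] (v : G → ℝ) (π : G → A) (i : A) : ℝ :=
  ∑ j ∈ Finset.univ.filter (fun j => π j = i), v j

/-- Nash social welfare: geometric mean of agents' valuations. -/
noncomputable def NSW {G A : Type*} [Fintype G] [Fintype A] [DecidableEq A]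
    (v : G → ℝ) (π : G → A) : ℝ :=
  (∏ i, V v π i) ^ ((1 : ℝ) / (Fintype.card A))

open Finset

section Allocation

variable {G A : Type*} [Fintype G] [DecidableEq A] {v : G → ℝ}

lemma V_nonneg (hv : ∀ j, 0 ≤ v j) (π : G → A) (i : A) : 0 ≤ V v π i :=
  sum_nonneg fun j _ => hv j

lemma V_pos_of_surjective (hv : ∀ j, 0 < v j) {π : G → A} (hπ : π.Surjective) (i : A) :
    0 < V v π i := by
  obtain ⟨j, rfl⟩ := hπ i
  exact sum_pos (fun j _ => hv j) ⟨j, by simp⟩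

lemma V_eq_sum_ite (v : G → ℝ) (π : G → A) (i : A) :
    V v π i = ∑ j, if π j = i then v j else 0 := by
  rw [V, sum_filter]

lemma V_update [DecidableEq G] (v : G → ℝ) (π : G → A) (j : G) (l i : A) :
    V v (Function.update π j l) i
      = V v π i + (if l = i then v j else 0) - (if π j = i then v j else 0) := by
  have h : (fun j' => if Function.update π j l j' = i then v j' else 0)
      = Function.update (fun j' => if π j' = i then v j' else 0) j (if l = i then v j else 0) := by
    funext j'
    by_cases hj : j' = j
    · subst hj; simp
    · simp [Function.update_of_ne hj]
  rw [V_eq_sum_ite, V_eq_sum_ite, h, sum_update_of_mem (mem_univ j), sdiff_singleton_eq_erase,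
    sum_erase_eq_sub (mem_univ j)]
  ring

lemma exists_two_mul_le_V (hv : ∀ j, 0 ≤ v j) {vmax : ℝ} (hvmax : IsGreatest (Set.range v) vmax)
    {π : G → A} {k : A} (hk : vmax < V v π k) : ∃ j, π j = k ∧ 2 * v j ≤ V v π k := by
  set S := univ.filter (fun j => π j = k)
  have hV : V v π k = ∑ j ∈ S, v j := rfl
  have hvmax₀ : 0 ≤ vmax := by
    obtain ⟨j, rfl⟩ := hvmax.1
    exact hv j
  -- a bundle worth more than any single good holds at least two goods
  have hS : 2 ≤ #S := by
    by_contra! hS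
    have hle := sum_le_card_nsmul S v vmax fun j _ => hvmax.2 ⟨j, rfl⟩
    have hS' : (#S : ℝ) ≤ 1 := by exact_mod_cast Nat.lt_succ_iff.mp hS
    rw [nsmul_eq_mul] at hle
    nlinarith
  obtain ⟨j, hjS, hjmin⟩ := S.exists_min_image v (card_pos.mp (by omega))
  refine ⟨j, (mem_filter.mp hjS).2, ?_⟩
  have hsum := card_nsmul_le_sum S v (v j) hjmin
  have hS' : (2 : ℝ) ≤ #S := by exact_mod_cast hS
  rw [nsmul_eq_mul] at hsum
  nlinarith [hv j]

variable [Fintype A]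

lemma sum_V (v : G → ℝ) (π : G → A) : ∑ i, V v π i = ∑ j, v j :=
  sum_fiberwise _ _ _

lemma exists_div_card_le_V [Nonempty A] (v : G → ℝ) (π : G → A) :
    ∃ k, (∑ j, v j) / Fintype.card A ≤ V v π k := by
  obtain ⟨k, -, hk⟩ := exists_le_of_sum_le (univ_nonempty (α := A))
    (f := fun _ => (∑ j, v j) / Fintype.card A) (g := V v π)
    (by simp [sum_V, mul_div_cancel₀, Fintype.card_ne_zero])
  exact ⟨k, hk⟩

lemma prod_V_le_of_NSW_le [Nonempty A] (hv : ∀ j, 0 ≤ v j) {π π' : G → A}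
    (h : NSW v π' ≤ NSW v π) : ∏ i, V v π' i ≤ ∏ i, V v π i :=
  (Real.rpow_le_rpow_iff (prod_nonneg fun i _ => V_nonneg hv π' i)
    (prod_nonneg fun i _ => V_nonneg hv π i) (by positivity)).mp h

section Optimal

variable {πs : G → A}

lemma V_pos_of_forall_prod_V_le
    (hopt : ∀ π' : G → A, ∏ i, V v π' i ≤ ∏ i, V v πs i) (hv : ∀ j, 0 < v j)
    (hcard : Fintype.card A ≤ Fintype.card G) (i : A) : 0 < V v πs i := by
  have : Nonempty A := ⟨i⟩
  obtain ⟨e⟩ := Function.Embedding.nonempty_of_card_le hcard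
  have hsurj : (Function.invFun e).Surjective := Function.invFun_surjective e.injective
  have hprod : 0 < ∏ i, V v πs i :=
    (prod_pos fun i _ => V_pos_of_surjective hv hsurj i).trans_le (hopt _)
  exact (V_nonneg (fun j => (hv j).le) πs i).lt_of_ne'
    (prod_ne_zero_iff.mp hprod.ne' i (mem_univ i))

lemma V_sub_le_V_of_forall_prod_V_le [DecidableEq G]
    (hopt : ∀ π' : G → A, ∏ i, V v π' i ≤ ∏ i, V v πs i) (hv : ∀ j, 0 < v j)
    (hpos : ∀ i, 0 < V v πs i) {j : G} {i : A} (hi : i ≠ πs j) :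
    V v πs (πs j) - v j ≤ V v πs i := by
  set k := πs j
  set π' := Function.update πs j i
  have hsplit (f : A → ℝ) : ∏ l, f l = (∏ l ∈ univ \ {i, k}, f l) * (f i * f k) := by
    rw [← prod_pair hi, prod_sdiff (subset_univ _)]
  have hrest : ∏ l ∈ univ \ {i, k}, V v π' l = ∏ l ∈ univ \ {i, k}, V v πs l := by
    refine prod_congr rfl fun l hl => ?_
    simp only [mem_sdiff, mem_univ, mem_insert, mem_singleton, true_and, not_or] at hl
    simp [π', V_update, Ne.symm hl.1, Ne.symm hl.2, k]
  have hVi : V v π' i = V v πs i + v j := by simp [π', V_update, Ne.symm hi, k]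
  have hVk : V v π' k = V v πs k - v j := by simp [π', V_update, hi, k]
  have h := hopt π'
  rw [hsplit, hsplit (V v πs), hrest, hVi, hVk] at h
  have hexch : (V v πs i + v j) * (V v πs k - v j) ≤ V v πs i * V v πs k :=
    le_of_mul_le_mul_left h (prod_pos fun l _ => hpos l)
  nlinarith [hv j]

lemma half_le_V_of_forall_prod_V_le
    (hopt : ∀ π' : G → A, ∏ i, V v π' i ≤ ∏ i, V v πs i) (hv : ∀ j, 0 < v j)
    (hpos : ∀ i, 0 < V v πs i) {vmax : ℝ} (hvmax : IsGreatest (Set.range v) vmax) {k : A}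
    (hk : vmax < V v πs k) (i : A) :
    V v πs k / 2 ≤ V v πs i := by
  classical
  obtain ⟨j, rfl, hj⟩ := exists_two_mul_le_V (fun j => (hv j).le) hvmax hk
  by_cases hi : i = πs j
  · subst hi
    linarith [hpos (πs j)]
  · linarith [V_sub_le_V_of_forall_prod_V_le hopt hv hpos hi]

end Optimal

end Allocation

lemma mul_sum_one_div_le_one_div {ι : Type*} [Fintype ι] [Nonempty ι] {x : ι → ℝ} {c : ℝ}
    (hc : 0 < c) (hx : ∀ i, c ≤ x i) : 1 / Fintype.card ι * ∑ i, 1 / x i ≤ 1 / c := by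
  have hsum : ∑ i, 1 / x i ≤ Fintype.card ι * (1 / c) :=
    calc ∑ i, 1 / x i ≤ ∑ _i : ι, 1 / c :=
          sum_le_sum fun i _ => one_div_le_one_div_of_le hc (hx i)
      _ = Fintype.card ι * (1 / c) := by rw [sum_const, card_univ, nsmul_eq_mul]
  have hcard : (0 : ℝ) < Fintype.card ι := by exact_mod_cast Fintype.card_pos
  calc 1 / Fintype.card ι * ∑ i, 1 / x i ≤ 1 / Fintype.card ι * (Fintype.card ι * (1 / c)) := by
        gcongr
    _ = 1 / c := by field_simp

theorem stmt7_general (n m : ℕ) (hnm : n ≤ m)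
    (v : Fin m → ℝ) (hv : ∀ j, 0 < v j)
    (vmax : ℝ) (hvmax : IsGreatest (Set.range v) vmax)
    (hlt : vmax < (∑ j, v j) / n)
    (ε : ℝ)
    (πs : Fin m → Fin n)
    (hopt : ∀ π' : Fin m → Fin n, NSW v π' ≤ NSW v πs)
    (π : Fin m → Fin n)
    (hclose : ∀ i, |V v π i - V v πs i| ≤ 2 * ε * vmax)
    (hε : 0 < ε) (hε' : ε ≤ 1/5) :
    (∀ i, 0 < V v π i) ∧
      (1 / (n : ℝ)) * ∑ i, 1 / V v π i ≤ 2 / (((∑ j, v j) / n) * (1 - 4 * ε)) := by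
  set μ := (∑ j, v j) / n
  obtain ⟨j₀, hj₀⟩ := hvmax.1
  have : Nonempty (Fin n) := ⟨πs j₀⟩
  have hprod (π' : Fin m → Fin n) := prod_V_le_of_NSW_le (fun j => (hv j).le) (hopt π')
  have hpos := V_pos_of_forall_prod_V_le hprod hv (by simpa using hnm)
  obtain ⟨k, hk⟩ : ∃ k, μ ≤ V v πs k := by simpa using exists_div_card_le_V v πs
  have hhalf (i : Fin n) : μ / 2 ≤ V v πs i :=
    (half_le_V_of_forall_prod_V_le hprod hv hpos hvmax (hlt.trans_le hk) i).trans' (by linarith)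
  have hμ : 0 < μ := (hj₀ ▸ hv j₀).trans hlt
  have hlow (i : Fin n) : μ * (1 - 4 * ε) / 2 ≤ V v π i := by
    have hperturb : 2 * ε * vmax ≤ 2 * ε * μ := by gcongr
    linarith [(abs_le.mp (hclose i)).1, hhalf i]
  have hc : 0 < μ * (1 - 4 * ε) / 2 := by nlinarith
  refine ⟨fun i => hc.trans_le (hlow i), ?_⟩
  rw [← one_div_div]
  simpa using mul_sum_one_div_le_one_div hc hlow

/-- Bound on the reciprocal of the harmonic mean of the valuations of `π`. -/
theorem stmt7 (n m : ℕ) (hn : 0 < n) (hnm : n ≤ m)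
    (v : Fin m → ℝ) (hv : ∀ j, 0 < v j)
    (vmax : ℝ) (hvmax : IsGreatest (Set.range v) vmax)
    (hlt : vmax < (∑ j, v j) / n)
    (ε : ℝ)
    (πs : Fin m → Fin n)
    (hopt : ∀ π' : Fin m → Fin n, NSW v π' ≤ NSW v πs)
    (π : Fin m → Fin n)
    (hclose : ∀ i, |V v π i - V v πs i| ≤ 2 * ε * vmax)
    (hε : 0 < ε) (hε' : ε ≤ 1/5) :
    (∀ i, 0 < V v π i) ∧
      (1 / (n : ℝ)) * ∑ i, 1 / V v π i ≤ 2 / (((∑ j, v j) / n) * (1 - 4 * ε)) :=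
  stmt7_general n m hnm v hv vmax hvmax hlt ε πs hopt π hclose hε hε'
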